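/- Let n ∈ ℕ, λ ∈ ℝ, and x = kλ for some k ∈ {0, 1, …, n−1}. For each t = 1, …, n let F_t be the (n+1)×(n+1) lower bidiagonal matrix with ones on the diagonal, subdiagonal entries (F_t)_{r,r−1} = x + (2t−r)λ for t+1 ≤ r ≤ min(t+k, n+1), (F_t)_{r,r−1} = 0 for all other r, and zeros elsewhere. Then P_{n,λ}[x] = F_n F_{n−1} ⋯ F_1; that is, the bidiagonal decomposition of P_{n,λ}[x] has all diagonal pivots equal to 1, multipliers m_{ij} = x + (i−2j)λ for i > j with j ≤ k, and all other multipliers equal to 0. -/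
import Mathlib


/-- `genPow x lam m` is the generalized power `x^{m|λ} = x(x+λ)⋯(x+(m−1)λ)`,
with `x^{0|λ} = 1`. -/
noncomputable def genPow (x lam : ℝ) (m : ℕ) : ℝ :=
  ∏ t ∈ Finset.range m, (x + t * lam)

/-- The generalized lower triangular Pascal matrix `P_{n,λ}[x]` (0-based
indices: entry `(i,j)` corresponds to math entry `(i+1, j+1)`). -/
noncomputable def genPascal (n : ℕ) (x lam : ℝ) :
    Matrix (Fin (n + 1)) (Fin (n + 1)) ℝ :=
  fun i j =>
    if (j : ℕ) ≤ (i : ℕ) then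
      genPow x lam ((i : ℕ) - (j : ℕ)) * ((i : ℕ).choose (j : ℕ)) else 0

/-- The lower bidiagonal matrix `F_t`: ones on the diagonal, entry at math
position `(r, r−1)` equal to `x + (2t−r)λ` for `t+1 ≤ r ≤ min(t+k, n+1)`,
zero for all other `r`, and zeros elsewhere.  In 0-based indexing, row `i`
corresponds to `r = i+1`. -/
noncomputable def FmatK (n : ℕ) (x lam : ℝ) (k t : ℕ) :
    Matrix (Fin (n + 1)) (Fin (n + 1)) ℝ :=
  fun i j =>
    if (i : ℕ) = (j : ℕ) then 1
    else if (i : ℕ) = (j : ℕ) + 1 ∧ t ≤ (i : ℕ) ∧ (i : ℕ) + 1 ≤ t + k then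
      x + (2 * (t : ℝ) - ((i : ℕ) + 1)) * lam
    else 0

lemma genPow_zero (x lam : ℝ) : genPow x lam 0 = 1 := by simp [genPow]

lemma genPow_succ (x lam : ℝ) (m : ℕ) :
    genPow x lam (m+1) = genPow x lam m * (x + m * lam) := by
  simp [genPow, Finset.prod_range_succ]

lemma genPow_succ' (x lam : ℝ) (m : ℕ) :
    genPow x lam (m+1) = x * genPow (x + lam) lam m := by
  rw [genPow, Finset.prod_range_succ']
  simp only [Nat.cast_zero, zero_mul, add_zero, genPow]
  rw [mul_comm]
  congr 1
  apply Finset.prod_congr rfl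
  intro u _
  push_cast
  ring

lemma genPow_zero_left (lam : ℝ) (m : ℕ) : genPow 0 lam (m+1) = 0 := by
  rw [genPow_succ']; ring

/-- The key three-term identity. -/
lemma key_id (y lam : ℝ) (t m : ℕ) :
    genPow y lam (m+1) * ((t+1).choose (m+1))
      = genPow (y - lam) lam (m+1) * (t.choose (m+1))
        + (y + t * lam) * (genPow y lam m * (t.choose m)) := by
  have hcast : ((m:ℝ) + 1) * (t.choose (m+1)) = ((t:ℝ) - m) * (t.choose m) := by
    rcases le_or_gt m t with h | h
    · have h1 := Nat.choose_succ_right_eq t m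
      have h2 : ((t.choose (m+1) * (m+1) : ℕ) : ℝ) = ((t.choose m * (t - m) : ℕ) : ℝ) := by
        rw [h1]
      push_cast [Nat.cast_sub h] at h2
      linarith
    · rw [Nat.choose_eq_zero_of_lt h, Nat.choose_eq_zero_of_lt (by omega)]
      push_cast; ring
  rw [genPow_succ, genPow_succ', Nat.choose_succ_succ t m]
  have h3 : y - lam + lam = y := by ring
  rw [h3]
  simp only [Nat.succ_eq_add_one]
  push_cast
  linear_combination (genPow y lam m * lam) * hcast

/-- Entry `(i,j)` of the partial product `F_t F_{t-1} ⋯ F_1`. -/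
noncomputable def eAux (x lam : ℝ) (k t i j : ℕ) : ℝ :=
  if j ≤ i then
    (if i < t then genPow x lam (i - j) * (i.choose j)
     else if i ≤ t + k then
       genPow (x - ((i - t : ℕ) : ℝ) * lam) lam (i - j) * (t.choose (i - j))
     else if i = j then 1 else 0)
  else 0

lemma eAux_zero_row (x lam : ℝ) (k t j : ℕ) :
    eAux x lam k t 0 j = if j = 0 then 1 else 0 := by
  unfold eAux
  rcases Nat.eq_zero_or_pos j with hj | hj
  · subst hj
    simp only [Nat.le_zero, Nat.sub_zero, genPow_zero, Nat.choose_self, Nat.choose_zero_right]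
    split_ifs <;> simp
  · rw [if_neg (by omega), if_neg (by omega)]

lemma eAux_step (x lam : ℝ) (k : ℕ) (hx : x = (k : ℝ) * lam) (t i j : ℕ) (c : ℝ)
    (hc : c = if t + 1 ≤ i + 1 ∧ i + 1 + 1 ≤ t + 1 + k
        then x + (2 * ((t : ℝ) + 1) - ((i : ℝ) + 2)) * lam else 0) :
    eAux x lam k (t+1) (i+1) j = eAux x lam k t (i+1) j + c * eAux x lam k t i j := by
  by_cases hji : j ≤ i + 1
  case neg =>
    unfold eAux
    rw [if_neg hji, if_neg hji, if_neg (show ¬ j ≤ i by omega)]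
    ring
  rcases lt_or_ge i t with hit | hit
  · -- Case A : i < t, so row i+1 ≤ t; the multiplier is zero.
    have hc0 : c = 0 := by rw [hc, if_neg (by omega)]
    rw [hc0, zero_mul, add_zero]
    unfold eAux
    rw [if_pos hji, if_pos hji, if_pos (show i + 1 < t + 1 by omega)]
    rcases lt_or_ge (i+1) t with h1 | h1
    · rw [if_pos h1]
    · -- i + 1 = t
      have ht : t = i + 1 := by omega
      subst ht
      rw [if_neg (by omega), if_pos (by omega)]
      rw [Nat.sub_self, Nat.cast_zero, zero_mul, sub_zero, Nat.choose_symm hji]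
  · rcases le_or_gt (i + 1) (t + k) with hik | hik
    · -- Case B1 : t ≤ i and i + 1 ≤ t + k; multiplier nonzero.
      have hcv : c = (x - ((i : ℝ) - t) * lam) + t * lam := by
        rw [hc, if_pos (by omega)]; ring
      unfold eAux
      rw [if_pos hji, if_pos hji,
        if_neg (show ¬ i + 1 < t + 1 by omega), if_neg (show ¬ i + 1 < t by omega),
        if_pos (show i + 1 ≤ (t+1) + k by omega), if_pos hik]
      have hs1 : ((i + 1 - (t + 1) : ℕ) : ℝ) = (i : ℝ) - t := by
        rw [show i + 1 - (t + 1) = i - t by omega, Nat.cast_sub hit]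
      have hs2 : ((i + 1 - t : ℕ) : ℝ) = (i : ℝ) - t + 1 := by
        rw [show i + 1 - t = (i - t) + 1 by omega, Nat.cast_add, Nat.cast_sub hit, Nat.cast_one]
      rw [hs1, hs2, hcv]
      rcases eq_or_lt_of_le hji with hji' | hji'
      · -- j = i + 1 : last factor vanishes (guard j ≤ i fails)
        rw [if_neg (show ¬ j ≤ i by omega), mul_zero, add_zero]
        rw [← hji', Nat.sub_self, genPow_zero, genPow_zero, Nat.choose_zero_right,
          Nat.choose_zero_right]
      · have hjle : j ≤ i := by omega
        rw [if_pos hjle, if_neg (show ¬ i < t by omega), if_pos (show i ≤ t + k by omega)]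
        have hs3 : ((i - t : ℕ) : ℝ) = (i : ℝ) - t := Nat.cast_sub hit
        rw [hs3]
        have hm : i + 1 - j = (i - j) + 1 := by omega
        rw [hm]
        have := key_id (x - ((i : ℝ) - t) * lam) lam t (i - j)
        have hylam : x - ((i : ℝ) - t + 1) * lam = (x - ((i : ℝ) - t) * lam) - lam := by ring
        rw [hylam]
        exact this
    · -- multiplier zero cases
      have hc0 : c = 0 := by rw [hc, if_neg (by omega)]
      rw [hc0, zero_mul, add_zero]
      unfold eAux
      rw [if_pos hji, if_pos hji, if_neg (show ¬ i + 1 < t + 1 by omega),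
        if_neg (show ¬ i + 1 < t by omega), if_neg (show ¬ i + 1 ≤ t + k by omega)]
      rcases le_or_gt (i + 1) (t + 1 + k) with h2 | h2
      · -- Case B2 : i + 1 = t + k + 1, uses x = kλ
        have hik' : i = t + k := by omega
        rw [if_pos h2]
        have hs : ((i + 1 - (t + 1) : ℕ) : ℝ) = (k : ℝ) := by
          rw [show i + 1 - (t + 1) = k by omega]
        rw [hs, hx, sub_self]
        rcases eq_or_lt_of_le hji with hji' | hji'
        · rw [← hji', Nat.sub_self, genPow_zero, Nat.choose_zero_right, if_pos rfl]
          norm_num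
        · rw [if_neg (show ¬ i + 1 = j by omega)]
          have hm : i + 1 - j = (i - j) + 1 := by omega
          rw [hm]
          have hz : (0 : ℝ) = 0 * lam := by ring
          rw [genPow_zero_left, zero_mul]
      · -- Case C
        rw [if_neg (by omega)]

noncomputable def Emat (n : ℕ) (x lam : ℝ) (k t : ℕ) :
    Matrix (Fin (n + 1)) (Fin (n + 1)) ℝ :=
  fun i j => eAux x lam k t (i : ℕ) (j : ℕ)

lemma Emat_zero (n : ℕ) (x lam : ℝ) (k : ℕ) : Emat n x lam k 0 = 1 := by
  ext i j
  rw [Matrix.one_apply]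
  unfold Emat eAux
  by_cases hij : i = j
  · subst hij
    rw [if_pos rfl, if_pos le_rfl, if_neg (by omega), Nat.sub_self]
    split_ifs <;> simp_all [genPow_zero]
  · have hij' : (i : ℕ) ≠ (j : ℕ) := fun h => hij (Fin.ext h)
    rw [if_neg hij]
    by_cases hji : (j : ℕ) ≤ (i : ℕ)
    · rw [if_pos hji, if_neg (show ¬ (i : ℕ) < 0 by omega)]
      by_cases h : (i : ℕ) ≤ 0 + k
      · rw [if_pos h, show (i : ℕ) - (j : ℕ) = ((i : ℕ) - (j : ℕ) - 1) + 1 by omega,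
          Nat.choose_zero_succ, Nat.cast_zero, mul_zero]
      · rw [if_neg h, if_neg hij']
    · rw [if_neg hji]

lemma Emat_step (n : ℕ) (x lam : ℝ) (k : ℕ) (hx : x = (k : ℝ) * lam) (t : ℕ) :
    FmatK n x lam k (t + 1) * Emat n x lam k t = Emat n x lam k (t + 1) := by
  ext i j
  rw [Matrix.mul_apply]
  induction i using Fin.cases with
  | zero =>
    rw [Finset.sum_eq_single (0 : Fin (n + 1))]
    · have h1 : FmatK n x lam k (t + 1) 0 0 = 1 := by
        unfold FmatK; rw [if_pos rfl]
      rw [h1, one_mul]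
      show eAux x lam k t 0 (j : ℕ) = eAux x lam k (t + 1) 0 (j : ℕ)
      rw [eAux_zero_row, eAux_zero_row]
    · intro b _ hb
      have hb' : ((0 : Fin (n+1)) : ℕ) ≠ (b : ℕ) := by
        intro h; exact hb (Fin.ext h.symm)
      have h0 : FmatK n x lam k (t + 1) 0 b = 0 := by
        unfold FmatK
        rw [if_neg hb', if_neg (by simp)]
      rw [h0, zero_mul]
    · simp
  | succ i' =>
    have hsplit : ∀ l : Fin (n + 1),
        FmatK n x lam k (t + 1) i'.succ l * Emat n x lam k t l j
          = (if l = i'.succ then Emat n x lam k t i'.succ j else 0)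
            + (if l = i'.castSucc then
                (if t + 1 ≤ (i' : ℕ) + 1 ∧ (i' : ℕ) + 1 + 1 ≤ t + 1 + k
                  then x + (2 * ((t : ℝ) + 1) - (((i' : ℕ) : ℝ) + 2)) * lam else 0)
                  * Emat n x lam k t i'.castSucc j else 0) := by
      intro l
      by_cases h1 : l = i'.succ
      · subst h1
        rw [if_pos rfl, if_neg (by
          intro h
          have := congrArg Fin.val h
          simp [Fin.val_succ, Fin.coe_castSucc] at this)]
        unfold FmatK
        rw [if_pos rfl, one_mul, add_zero]
      · rw [if_neg h1]
        by_cases h2 : l = i'.castSucc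
        · subst h2
          rw [if_pos rfl, zero_add]
          unfold FmatK
          by_cases h3 : t + 1 ≤ (i' : ℕ) + 1 ∧ (i' : ℕ) + 1 + 1 ≤ t + 1 + k
          · rw [if_neg (show ¬ ((i'.succ : ℕ) = (i'.castSucc : ℕ)) by simp),
              if_pos (show (i'.succ : ℕ) = (i'.castSucc : ℕ) + 1 ∧ t + 1 ≤ (i'.succ : ℕ) ∧
                  (i'.succ : ℕ) + 1 ≤ t + 1 + k by
                refine ⟨by simp, ?_, ?_⟩ <;>
                  simp only [Fin.val_succ] <;> omega),
              if_pos h3]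
            congr 1
            simp only [Fin.val_succ]
            push_cast
            ring
          · rw [if_neg (show ¬ ((i'.succ : ℕ) = (i'.castSucc : ℕ)) by simp),
              if_neg (by
                rintro ⟨-, h4, h5⟩
                simp only [Fin.val_succ] at h4 h5
                exact h3 ⟨h4, h5⟩),
              if_neg h3]
        · rw [if_neg h2, add_zero]
          have hv1 : ¬ ((i'.succ : ℕ) = (l : ℕ)) := fun h => h1 (Fin.ext h.symm)
          have hv2 : ¬ ((i'.succ : ℕ) = (l : ℕ) + 1) := by
            intro h
            simp only [Fin.val_succ] at h
            exact h2 (Fin.ext (by simp only [Fin.coe_castSucc]; omega))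
          unfold FmatK
          rw [if_neg hv1, if_neg (fun hcon => hv2 hcon.1), zero_mul]
    rw [Finset.sum_congr rfl fun l _ => hsplit l, Finset.sum_add_distrib,
      Finset.sum_ite_eq' Finset.univ i'.succ, Finset.sum_ite_eq' Finset.univ i'.castSucc,
      if_pos (Finset.mem_univ _), if_pos (Finset.mem_univ _)]
    show eAux x lam k t ((i'.succ : ℕ)) (j : ℕ) + _ * eAux x lam k t ((i'.castSucc : ℕ)) (j : ℕ)
        = eAux x lam k (t + 1) ((i'.succ : ℕ)) (j : ℕ)
    simp only [Fin.val_succ, Fin.coe_castSucc]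
    exact (eAux_step x lam k hx t (i' : ℕ) (j : ℕ) _ rfl).symm

lemma Emat_pascal (n : ℕ) (x lam : ℝ) (k : ℕ) :
    Emat n x lam k n = genPascal n x lam := by
  ext i j
  unfold Emat eAux genPascal
  by_cases hji : (j : ℕ) ≤ (i : ℕ)
  · rw [if_pos hji, if_pos hji]
    rcases lt_or_ge (i : ℕ) n with h | h
    · rw [if_pos h]
    · have hin : (i : ℕ) = n := by omega
      rw [if_neg (by omega), if_pos (by omega), hin, Nat.sub_self, Nat.cast_zero,
        zero_mul, sub_zero, Nat.choose_symm (show (j : ℕ) ≤ n by omega)]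
  · rw [if_neg hji, if_neg hji]

lemma prod_eq (n : ℕ) (x lam : ℝ) (k : ℕ) (hx : x = (k : ℝ) * lam) :
    ∀ t : ℕ, ((List.range t).map (fun s => FmatK n x lam k (t - s))).prod
      = Emat n x lam k t := by
  intro t
  induction t with
  | zero => simpa using (Emat_zero n x lam k).symm
  | succ t ih =>
    rw [List.range_succ_eq_map, List.map_cons, List.map_map, List.prod_cons,
      Nat.sub_zero]
    have hfun : ((fun s => FmatK n x lam k (t + 1 - s)) ∘ Nat.succ)
        = fun s => FmatK n x lam k (t - s) := by
      funext s
      simp only [Function.comp_apply, Nat.succ_sub_succ]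
    rw [hfun, ih]
    exact Emat_step n x lam k hx t

/-- If `x = kλ` for some `k ∈ {0, 1, …, n−1}`, then
`P_{n,λ}[x] = F_n F_{n−1} ⋯ F_1`: the bidiagonal decomposition of
`P_{n,λ}[x]` has all diagonal pivots equal to `1`, multipliers
`m_{ij} = x + (i−2j)λ` for `i > j` with `j ≤ k`, and all other
multipliers equal to `0`. -/
theorem genPascal_bidiagonal_decomposition_of_eq_mul (n : ℕ) (x lam : ℝ)
    (k : ℕ) (hk : k < n) (hx : x = (k : ℝ) * lam) :
    genPascal n x lam
      = ((List.range n).map (fun s => FmatK n x lam k (n - s))).prod := by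
  rw [prod_eq n x lam k hx n, Emat_pascal]
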